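/- arXiv:1408.4317 — 2 statements merged into one kernel-verified Lean document; each statement's English description precedes it below -/
import Mathlib

section
/- The map φ : SL(m,ℝ) → GL(s(m)) given by φ(a)X = aXaᵀ is a group homomorphism into the special linear group of the vector space of real symmetric m×m matrices. -/
/-- The submodule of real symmetric `m × m` matrices. -/
def symS (m : ℕ) : Submodule ℝ (Matrix (Fin m) (Fin m) ℝ) where
  carrier := {X | X.transpose = X}
  add_mem' := by intro a b ha hb; simp_all [Matrix.transpose_add]
  zero_mem' := by simp
  smul_mem' := by intro c a ha; simp_all [Matrix.transpose_smul]

/-!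
Multiplicativity is the identity `(ab) X (ab)ᵀ = a (b X bᵀ) aᵀ`, so `a ↦ det (φ a)` is a
homomorphism from `SL(m, ℝ)` into a commutative monoid. Such a homomorphism is trivial because
`SL(m, ℝ)` is perfect: conjugating a transvection by `diag(2, 1/2)` multiplies its off-diagonal
entry by `4`, which makes every transvection a commutator, and `SL(m, ℝ)` is generated by
transvections and such diagonal matrices, which are themselves products of transvections.
-/

open Matrix
open scoped commutatorElement

namespace Matrix.SpecialLinearGroup

variable {ι K : Type*} [Fintype ι] [DecidableEq ι] [Field K]

lemma diag2n_mul_transvection {i j : ι} (hij : i ≠ j) {a : K} (ha : a ≠ 0) (b : K) :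
    diag2n hij a ha * transvection hij b = transvection hij (a ^ 2 * b) * diag2n hij a ha := by
  ext k l
  simp only [coe_mul, transvection_coe, diag2n_coe, mul_add, add_mul, diagonal_mul, mul_diagonal,
    add_apply, single_apply, one_apply]
  split_ifs <;> grind

lemma commutator_diag2n_transvection {i j : ι} (hij : i ≠ j) {a : K} (ha : a ≠ 0) (b : K) :
    ⁅diag2n hij a ha, transvection hij b⁆ = transvection hij (b * (a ^ 2 - 1)) := by
  rw [commutatorElement_def, diag2n_mul_transvection, mul_inv_cancel_right, transvection_inv,
    ← transvection_add]
  ring_nf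

lemma transvection_mem_commutator_of_sq_ne_one {a : K} (ha : a ≠ 0) (hasq : a ^ 2 ≠ 1)
    {i j : ι} (hij : i ≠ j) (c : K) :
    transvection hij c ∈ commutator (SpecialLinearGroup ι K) := by
  rw [← div_mul_cancel₀ c (sub_ne_zero_of_ne hasq), ← commutator_diag2n_transvection hij ha]
  exact Subgroup.commutator_mem_commutator (Subgroup.mem_top _) (Subgroup.mem_top _)

lemma diag2n_eq_transvection_prod {i j : ι} (hij : i ≠ j) {a : K} (ha : a ≠ 0) :
    diag2n hij a ha = transvection hij a * transvection hij.symm (-a⁻¹) * transvection hij a *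
      transvection hij (-1) * transvection hij.symm 1 * transvection hij (-1) := by
  ext k l
  simp only [coe_mul, transvection_coe, diag2n_coe, mul_add, add_mul, mul_one, one_mul,
    single_mul_single_same, single_mul_single_of_ne _ _ _ _ hij,
    single_mul_single_of_ne _ _ _ _ hij.symm, diagonal_apply, add_apply, single_apply, one_apply,
    add_zero]
  split_ifs <;> grind

theorem commutator_eq_top [Nontrivial ι] {a : K} (ha : a ≠ 0) (hasq : a ^ 2 ≠ 1) :
    commutator (SpecialLinearGroup ι K) = ⊤ := by
  refine eq_top_iff.2 fun M _ ↦ diagonal_transvection_induction' _ M (fun i j hij c hc ↦ ?_)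
    (fun i j hij ↦ transvection_mem_commutator_of_sq_ne_one ha hasq hij)
    (fun _ _ ↦ mul_mem)
  rw [diag2n_eq_transvection_prod hij hc]
  repeat refine mul_mem ?_ (transvection_mem_commutator_of_sq_ne_one ha hasq _ _)
  exact transvection_mem_commutator_of_sq_ne_one ha hasq _ _

end Matrix.SpecialLinearGroup

theorem MonoidHom.apply_eq_one_of_commutator_eq_top {G M : Type*} [Group G] [CommMonoid M]
    (hG : commutator G = ⊤) (f : G →* M) (g : G) : f g = 1 := by
  have hker : f.toHomUnits g = 1 :=
    Abelianization.commutator_subset_ker f.toHomUnits (hG ▸ Subgroup.mem_top g)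
  simpa using congrArg Units.val hker

/-- The map `φ : SL(m,ℝ) → GL(s(m))`, `φ(a)X = aXaᵀ`, is a group homomorphism
into the special linear group of the space of real symmetric matrices:
it preserves products and identity, and every `φ(a)` has determinant `1`. -/
theorem stmt3 (m : ℕ) (hm : 2 ≤ m)
    (φ : Matrix.SpecialLinearGroup (Fin m) ℝ → (symS m →ₗ[ℝ] symS m))
    (hφ : ∀ (a : Matrix.SpecialLinearGroup (Fin m) ℝ) (X : symS m),
      (φ a X : Matrix (Fin m) (Fin m) ℝ) =
        (a : Matrix (Fin m) (Fin m) ℝ) * X * (a : Matrix (Fin m) (Fin m) ℝ).transpose) :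
    (∀ a b, φ (a * b) = (φ a).comp (φ b)) ∧ φ 1 = LinearMap.id ∧
      ∀ a, LinearMap.det (φ a) = 1 := by
  have hmul : ∀ a b, φ (a * b) = (φ a).comp (φ b) := fun a b ↦ by
    ext X : 2
    simp [hφ, Matrix.mul_assoc]
  have hone : φ 1 = LinearMap.id := by
    ext X : 2
    simp [hφ]
  let ψ : SpecialLinearGroup (Fin m) ℝ →* Module.End ℝ (symS m) :=
    { toFun := φ, map_one' := hone, map_mul' := hmul }
  have : Nontrivial (Fin m) := Fin.nontrivial_iff_two_le.2 hm
  exact ⟨hmul, hone, (LinearMap.det.comp ψ).apply_eq_one_of_commutator_eq_top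
    (SpecialLinearGroup.commutator_eq_top two_ne_zero (by norm_num))⟩
end

section
/- For any traceless Hermitian m×m matrix X, the real-linear map on the space of traceless Hermitian matrices Y ↦ XY + YX − (2/m)tr(XY)·I is traceless as a real-linear endomorphism. -/
/-!
The map `T Y = XY + YX - (2/m) tr(XY) I` is the restriction of a `ℂ`-linear map on all of
`M_m(ℂ)`. Left and right multiplication by `X` each have trace `m tr X`, and the rank-one part has
trace `(2/m) tr X`, so the complex trace of `T` is `(2m - 2/m) tr X = 0`.

As a real space `M_m(ℂ) = H ⊕ iH`, `H` the Hermitian matrices, and `T` preserves both summands and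
acts on them in the same way, so its real trace is `2 tr(T|H)`; on the other hand the real trace
of a complex-linear map is twice the real part of its complex trace. Hence `tr(T|H) = 0`. Finally
`T` maps all of `H` into `h₀(m)`, so its trace on `h₀(m)` equals its trace on `H`.
-/

noncomputable def herm0 (m : ℕ) : Submodule ℝ (Matrix (Fin m) (Fin m) ℂ) :=
  selfAdjoint.submodule ℝ (Matrix (Fin m) (Fin m) ℂ) ⊓
    LinearMap.ker ((Matrix.traceLinearMap (Fin m) ℂ ℂ).restrictScalars ℝ)

open Complex Matrix ComplexStarModule

theorem LinearMap.trace_restrictScalars {R S M : Type*} [CommRing R] [CommRing S] [Algebra R S]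
    [AddCommGroup M] [Module R M] [Module S M] [IsScalarTower R S M]
    [Module.Free R S] [Module.Finite R S] [Module.Free S M] [Module.Finite S M]
    (f : M →ₗ[S] M) :
    trace R M (f.restrictScalars R) = Algebra.trace R S (trace S M f) := by
  classical
  let bS := Module.Free.chooseBasis R S
  let bM := Module.Free.chooseBasis S M
  rw [trace_eq_matrix_trace R (bS.smulTower' bM), restrictScalars_toMatrix,
    trace_eq_matrix_trace S bM, Matrix.trace, Matrix.trace, map_sum]
  simp [Algebra.trace_eq_matrix_trace bS, Matrix.trace, Fintype.sum_prod_type]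

theorem LinearMap.trace_eq_trace_of_forall_mem_of_le {K M : Type*} [Field K] [AddCommGroup M]
    [Module K M] [FiniteDimensional K M] {p q : Submodule K M} (hpq : p ≤ q)
    (g : q →ₗ[K] q) (hg : ∀ x, (g x : M) ∈ p) (f : p →ₗ[K] p)
    (hf : ∀ x, (f x : M) = g (Submodule.inclusion hpq x)) :
    trace K p f = trace K q g := by
  let p' : Submodule K q := p.comap q.subtype
  have hg' : ∀ x, g x ∈ p' := hg
  have hfg : f = (Submodule.comapSubtypeEquivOfLe hpq).conj (g.restrict fun x _ ↦ hg' x) := by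
    ext x
    exact hf x
  rw [hfg, trace_conj', trace_restrict_eq_of_forall_mem p' g hg']

section ComplexStarModule

variable {A : Type*} [AddCommGroup A] [Module ℂ A] [Module ℝ A] [IsScalarTower ℝ ℂ A]
  [StarAddMonoid A] [StarModule ℂ A] [StarModule ℝ A]

local notation "𝒮" => selfAdjoint.submodule ℝ A

noncomputable def selfAdjointProdEquiv : (𝒮 × 𝒮) ≃ₗ[ℝ] A :=
  LinearEquiv.ofBijective
    ((𝒮).subtype.coprod ((I • LinearMap.id : A →ₗ[ℂ] A).restrictScalars ℝ ∘ₗ (𝒮).subtype)) <| by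
    constructor
    · rw [injective_iff_map_eq_zero]
      rintro ⟨⟨x, hx : IsSelfAdjoint x⟩, ⟨y, hy : IsSelfAdjoint y⟩⟩ h
      replace h : x + I • y = 0 := h
      have hx0 : x = 0 := by
        simpa [hx.coe_realPart, hy.imaginaryPart] using congrArg (fun a ↦ (ℜ a : A)) h
      have hy0 : y = 0 := by
        simpa [hy.coe_realPart, hx.imaginaryPart] using congrArg (fun a ↦ (ℑ a : A)) h
      simp [hx0, hy0]
    · intro a
      exact ⟨(⟨ℜ a, (ℜ a).2⟩, ⟨ℑ a, (ℑ a).2⟩), by simpa using realPart_add_I_smul_imaginaryPart a⟩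

lemma selfAdjointProdEquiv_apply (p : 𝒮 × 𝒮) :
    selfAdjointProdEquiv p = (p.1 : A) + I • (p.2 : A) := rfl

theorem trace_restrictScalars_eq_two_mul_trace_restrict_selfAdjoint [Module.Finite ℝ A]
    (G : A →ₗ[ℂ] A) (hG : ∀ a ∈ 𝒮, G a ∈ 𝒮) :
    LinearMap.trace ℝ A (G.restrictScalars ℝ) =
      2 * LinearMap.trace ℝ 𝒮 ((G.restrictScalars ℝ).restrict hG) := by
  have hconj : G.restrictScalars ℝ = selfAdjointProdEquiv.conj
      (((G.restrictScalars ℝ).restrict hG).prodMap ((G.restrictScalars ℝ).restrict hG)) := by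
    ext a
    obtain ⟨⟨x, y⟩, rfl⟩ := selfAdjointProdEquiv.surjective a
    simp only [LinearEquiv.conj_apply, LinearMap.comp_apply, LinearEquiv.coe_coe,
      LinearEquiv.symm_apply_apply]
    simp only [selfAdjointProdEquiv_apply, LinearMap.prodMap_apply,
      LinearMap.restrictScalars_apply, map_add, map_smul]
    rfl
  conv_lhs => rw [hconj]
  rw [LinearMap.trace_conj', LinearMap.trace_prodMap', two_mul]

theorem trace_restrict_selfAdjoint_eq_re_trace [Module.Finite ℂ A]
    (G : A →ₗ[ℂ] A) (hG : ∀ a ∈ 𝒮, G a ∈ 𝒮) :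
    LinearMap.trace ℝ 𝒮 ((G.restrictScalars ℝ).restrict hG) = (LinearMap.trace ℂ A G).re := by
  have : Module.Finite ℝ A := .trans ℂ A
  have h := trace_restrictScalars_eq_two_mul_trace_restrict_selfAdjoint G hG
  rw [LinearMap.trace_restrictScalars, Algebra.trace_complex_apply] at h
  linarith

end ComplexStarModule

section MatrixTrace

variable {m n R : Type*} [Fintype m] [Fintype n] [CommRing R]

lemma Matrix.stdBasis_repr_apply (A : Matrix m n R) (i : m) (j : n) :
    (stdBasis R m n).repr A (i, j) = A i j := by
  simp [stdBasis, Pi.basis_repr]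

variable [DecidableEq m] [DecidableEq n]

lemma LinearMap.trace_matrix_eq_sum_single (f : Matrix m n R →ₗ[R] Matrix m n R) :
    LinearMap.trace R (Matrix m n R) f = ∑ i, ∑ j, f (Matrix.single i j 1) i j := by
  rw [LinearMap.trace_eq_matrix_trace R (stdBasis R m n), Matrix.trace, Fintype.sum_prod_type]
  simp [LinearMap.toMatrix_apply, stdBasis_eq_single, stdBasis_repr_apply]

lemma Matrix.trace_mulLeft (A : Matrix m m R) :
    LinearMap.trace R (Matrix m m R) (LinearMap.mulLeft R A) = Fintype.card m * A.trace := by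
  simp [LinearMap.trace_matrix_eq_sum_single, Matrix.trace, Finset.mul_sum]

lemma Matrix.trace_mulRight (A : Matrix m m R) :
    LinearMap.trace R (Matrix m m R) (LinearMap.mulRight R A) = Fintype.card m * A.trace := by
  simp [LinearMap.trace_matrix_eq_sum_single, Matrix.trace]

end MatrixTrace

section TracelessAnticommutator

variable {n : Type*} [Fintype n] [DecidableEq n]

noncomputable def tracelessAnticommutator (X : Matrix n n ℂ) : Matrix n n ℂ →ₗ[ℂ] Matrix n n ℂ :=
  LinearMap.mulLeft ℂ X + LinearMap.mulRight ℂ X -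
    (traceLinearMap n ℂ ℂ ∘ₗ LinearMap.mulLeft ℂ X).smulRight ((2 / Fintype.card n : ℂ) • 1)

lemma tracelessAnticommutator_apply (X Y : Matrix n n ℂ) :
    tracelessAnticommutator X Y = X * Y + Y * X - (2 / Fintype.card n * (X * Y).trace) • 1 := by
  simp [tracelessAnticommutator, smul_smul, mul_comm]

lemma trace_tracelessAnticommutator (X : Matrix n n ℂ) :
    LinearMap.trace ℂ _ (tracelessAnticommutator X) =
      (2 * Fintype.card n - 2 / Fintype.card n) * X.trace := by
  simp only [tracelessAnticommutator, map_sub, map_add, trace_mulLeft, trace_mulRight,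
    LinearMap.trace_smulRight, LinearMap.comp_apply, LinearMap.mulLeft_apply, mul_smul_comm,
    mul_one, traceLinearMap_apply, trace_smul, smul_eq_mul]
  ring

lemma trace_tracelessAnticommutator_apply [Nonempty n] (X Y : Matrix n n ℂ) :
    (tracelessAnticommutator X Y).trace = 0 := by
  have hn : (Fintype.card n : ℂ) ≠ 0 := by simp
  rw [tracelessAnticommutator_apply, trace_sub, trace_add, trace_smul, trace_one,
    trace_mul_comm Y X, smul_eq_mul]
  field_simp
  ring

lemma isHermitian_tracelessAnticommutator_apply {X Y : Matrix n n ℂ} (hX : X.IsHermitian)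
    (hY : Y.IsHermitian) : (tracelessAnticommutator X Y).IsHermitian := by
  have htr : star (X * Y).trace = (X * Y).trace := by
    rw [← trace_conjTranspose, conjTranspose_mul, hX.eq, hY.eq, trace_mul_comm]
  rw [IsHermitian, tracelessAnticommutator_apply, conjTranspose_sub, conjTranspose_add,
    conjTranspose_mul, conjTranspose_mul, hX.eq, hY.eq, conjTranspose_smul, conjTranspose_one,
    star_mul', htr, show star (2 / Fintype.card n : ℂ) = 2 / Fintype.card n by simp,
    add_comm (Y * X)]

end TracelessAnticommutator

/-- For a traceless Hermitian matrix `X`, the real-linear endomorphism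
`Y ↦ XY + YX − (2/m)tr(XY)·I` of the space of traceless Hermitian matrices
has trace zero. -/
theorem stmt7 (m : ℕ) (hm : 2 ≤ m) (X : Matrix (Fin m) (Fin m) ℂ)
    (hX : X.IsHermitian) (hXtr : X.trace = 0)
    (f : herm0 m →ₗ[ℝ] herm0 m)
    (hf : ∀ Y : herm0 m,
      (f Y : Matrix (Fin m) (Fin m) ℂ) =
        X * Y + (Y : Matrix (Fin m) (Fin m) ℂ) * X -
          ((2 / (m : ℂ)) * (X * (Y : Matrix (Fin m) (Fin m) ℂ)).trace) • 1) :
    LinearMap.trace ℝ (herm0 m) f = 0 := by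
  have : Nonempty (Fin m) := ⟨⟨0, by omega⟩⟩
  let G := tracelessAnticommutator X
  have hG_apply (Y : Matrix (Fin m) (Fin m) ℂ) :
      G Y = X * Y + Y * X - (2 / (m : ℂ) * (X * Y).trace) • 1 := by
    simpa using tracelessAnticommutator_apply X Y
  have hG : ∀ Y ∈ selfAdjoint.submodule ℝ _, G Y ∈ selfAdjoint.submodule ℝ _ :=
    fun Y hY ↦ isHermitian_tracelessAnticommutator_apply hX hY
  have hG_mem : ∀ Y, ((G.restrictScalars ℝ).restrict hG Y : Matrix (Fin m) (Fin m) ℂ) ∈ herm0 m :=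
    fun Y ↦ ⟨hG Y Y.2, trace_tracelessAnticommutator_apply X Y⟩
  calc LinearMap.trace ℝ (herm0 m) f
      = LinearMap.trace ℝ _ ((G.restrictScalars ℝ).restrict hG) :=
        LinearMap.trace_eq_trace_of_forall_mem_of_le (p := herm0 m) inf_le_left _ hG_mem f
          fun Y ↦ (hf Y).trans (hG_apply Y).symm
    _ = (LinearMap.trace ℂ _ G).re := trace_restrict_selfAdjoint_eq_re_trace G hG
    _ = 0 := by simp [G, trace_tracelessAnticommutator, hXtr]
end
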